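/- Let G > 0 and s ≥ 0, let t₀ ∈ ℝ, and let a : [t₀,∞) → ℝ be differentiable with a(t) > 0 for all t and a(t) → ∞ as t → ∞. Suppose χ : [t₀,∞) → (0,∞) satisfies a'(t) − 2Gs/a(t)² = cosh(χ(t))/sinh(χ(t)) for all t ≥ t₀, and suppose S(t) = (π/G)·sinh²(χ(t))·a(t)² + 2π·(sinh(χ(t))·cosh(χ(t)) − χ(t))·s converges to a finite positive limit S_max as t → ∞. Then sinh(χ(t))·a(t) → √(G·S_max/π), χ(t) → 0, and a'(t)/a(t) → √(π/(G·S_max)) as t → ∞. -/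

import Mathlib

/-!
Since `x ≤ sinh x cosh x` for `x ≥ 0`, the volume term of the generalized entropy is nonnegative,
so the area term `(π/G) (a sinh χ)²` is bounded by the entropy. As `a → ∞`, this forces
`sinh χ → 0`, hence `χ → 0` and the volume term vanishes in the limit; the areal radius
`a sinh χ` then tends to `√(G Smax/π)`. Finally the marginality condition reads
`a'/a = cosh χ / (a sinh χ) + 2Gs/a³`, which tends to `1/√(G Smax/π)`.
-/

open Real Filter Topology

theorem Real.self_le_sinh_mul_cosh {x : ℝ} (hx : 0 ≤ x) : x ≤ sinh x * cosh x := by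
  have hsinh : x ≤ sinh x := Real.self_le_sinh_iff.mpr hx
  nlinarith [Real.one_le_cosh x]

theorem Filter.Tendsto.of_sq_of_nonneg {α : Type*} {l : Filter α} {f : α → ℝ} {y : ℝ}
    (hf : Tendsto (fun x => f x ^ 2) l (𝓝 y)) (hf₀ : ∀ᶠ x in l, 0 ≤ f x) :
    Tendsto f l (𝓝 √y) :=
  (hf.sqrt).congr' (hf₀.mono fun _ hx => Real.sqrt_sq hx)

noncomputable def generalizedEntropy (G s a χ : ℝ) : ℝ :=
  (π / G) * sinh χ ^ 2 * a ^ 2 + 2 * π * (sinh χ * cosh χ - χ) * s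

theorem areaTerm_le_generalizedEntropy {G s a χ : ℝ} (hs : 0 ≤ s) (hχ : 0 ≤ χ) :
    (π / G) * sinh χ ^ 2 * a ^ 2 ≤ generalizedEntropy G s a χ := by
  have hvol : 0 ≤ sinh χ * cosh χ - χ := sub_nonneg.mpr (Real.self_le_sinh_mul_cosh hχ)
  unfold generalizedEntropy
  have hπ := pi_pos
  nlinarith [mul_nonneg hvol hs]

section Limits

variable {α : Type*} {l : Filter α} {G s Smax : ℝ} {a χ : α → ℝ}

theorem tendsto_sinh_nhds_zero (hG : 0 < G) (hs : 0 ≤ s) (hχ : ∀ᶠ x in l, 0 ≤ χ x)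
    (ha : Tendsto a l atTop)
    (hS : Tendsto (fun x => generalizedEntropy G s (a x) (χ x)) l (𝓝 Smax)) :
    Tendsto (fun x => sinh (χ x)) l (𝓝 0) := by
  have hbound : Tendsto (fun x => G / π * generalizedEntropy G s (a x) (χ x) / a x ^ 2) l (𝓝 0) :=
    (hS.const_mul _).div_atTop ((tendsto_pow_atTop two_ne_zero).comp ha)
  have hsq : Tendsto (fun x => sinh (χ x) ^ 2) l (𝓝 0) := by
    refine tendsto_of_tendsto_of_tendsto_of_le_of_le' tendsto_const_nhds hbound
      (Eventually.of_forall fun _ => sq_nonneg _) ?_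
    filter_upwards [hχ, ha.eventually_gt_atTop 0] with x hχx hax
    have hA := areaTerm_le_generalizedEntropy (G := G) (a := a x) hs hχx
    rw [le_div_iff₀ (by positivity), mul_comm (G / π), ← div_le_iff₀ (by positivity)]
    calc sinh (χ x) ^ 2 * a x ^ 2 / (G / π) = π / G * sinh (χ x) ^ 2 * a x ^ 2 := by
          field_simp
      _ ≤ _ := hA
  simpa using hsq.of_sq_of_nonneg (hχ.mono fun _ hx => Real.sinh_nonneg_iff.mpr hx)

theorem tendsto_nhds_zero_of_tendsto_sinh (h : Tendsto (fun x => sinh (χ x)) l (𝓝 0)) :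
    Tendsto χ l (𝓝 0) := by
  simpa [Function.comp_def] using (Real.continuous_arsinh.tendsto 0).comp h

theorem tendsto_sinh_mul_sq (hG : 0 < G) (hχ : Tendsto χ l (𝓝 0))
    (hS : Tendsto (fun x => generalizedEntropy G s (a x) (χ x)) l (𝓝 Smax)) :
    Tendsto (fun x => (sinh (χ x) * a x) ^ 2) l (𝓝 (G * Smax / π)) := by
  have hvol : Tendsto (fun x => 2 * π * (sinh (χ x) * cosh (χ x) - χ x) * s) l (𝓝 0) := by
    have hcont : Continuous fun y => 2 * π * (sinh y * cosh y - y) * s := by fun_prop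
    simpa [Function.comp_def] using (hcont.tendsto 0).comp hχ
  have harea := (hS.sub hvol).const_mul (G / π)
  convert harea using 1
  · ext x
    rw [generalizedEntropy, add_sub_cancel_right]
    field_simp
  · rw [sub_zero, div_mul_eq_mul_div]

theorem tendsto_deriv_div_self {L : ℝ} (hL : L ≠ 0) (ha : Tendsto a l atTop)
    (hχ : Tendsto χ l (𝓝 0)) (hR : Tendsto (fun x => sinh (χ x) * a x) l (𝓝 L))
    {a' : α → ℝ} (hmarg : ∀ᶠ x in l, a' x - 2 * G * s / a x ^ 2 = cosh (χ x) / sinh (χ x))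
    (hχ₀ : ∀ᶠ x in l, χ x ≠ 0) :
    Tendsto (fun x => a' x / a x) l (𝓝 L⁻¹) := by
  have hcosh : Tendsto (fun x => cosh (χ x)) l (𝓝 1) := by
    simpa [Function.comp_def] using (Real.continuous_cosh.tendsto 0).comp hχ
  have hsum : Tendsto (fun x => cosh (χ x) / (sinh (χ x) * a x) + 2 * G * s / a x ^ 3) l
      (𝓝 (1 / L + 0)) := (hcosh.div hR hL).add
    (tendsto_const_nhds.div_atTop ((tendsto_pow_atTop three_ne_zero).comp ha))
  rw [one_div, add_zero] at hsum
  refine hsum.congr' ?_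
  filter_upwards [hmarg, hχ₀, ha.eventually_gt_atTop 0] with x hx hχx hax
  have hsinh : sinh (χ x) ≠ 0 := Real.sinh_ne_zero.mpr hχx
  rw [eq_add_of_sub_eq hx]
  field_simp

end Limits

theorem stmt_3_general (G s t₀ Smax : ℝ) (hG : 0 < G) (hs : 0 ≤ s)
    (a χ : ℝ → ℝ)
    (ha_pos : ∀ t, t₀ ≤ t → 0 < a t)
    (ha_inf : Tendsto a atTop atTop)
    (hχ_pos : ∀ t, t₀ ≤ t → 0 < χ t)
    (hχ_eq : ∀ t, t₀ ≤ t →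
      deriv a t - 2 * G * s / (a t) ^ 2 = Real.cosh (χ t) / Real.sinh (χ t))
    (hSmax : 0 < Smax)
    (hS : Tendsto (fun t => (π / G) * (Real.sinh (χ t)) ^ 2 * (a t) ^ 2 +
        2 * π * (Real.sinh (χ t) * Real.cosh (χ t) - χ t) * s)
      atTop (nhds Smax)) :
    Tendsto (fun t => Real.sinh (χ t) * a t) atTop (nhds (Real.sqrt (G * Smax / π))) ∧
    Tendsto χ atTop (nhds 0) ∧
    Tendsto (fun t => deriv a t / a t) atTop (nhds (Real.sqrt (π / (G * Smax)))) := by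
  have hlate : ∀ᶠ t in atTop, t₀ ≤ t := eventually_ge_atTop t₀
  have hχ_late : ∀ᶠ t in atTop, 0 < χ t := hlate.mono hχ_pos
  have hχ0 : Tendsto χ atTop (nhds 0) := tendsto_nhds_zero_of_tendsto_sinh <|
    tendsto_sinh_nhds_zero hG hs (hχ_late.mono fun _ => le_of_lt) ha_inf hS
  have hR : Tendsto (fun t => sinh (χ t) * a t) atTop (𝓝 √(G * Smax / π)) := by
    refine (tendsto_sinh_mul_sq hG hχ0 hS).of_sq_of_nonneg ?_
    filter_upwards [hlate] with t ht
    exact mul_nonneg (Real.sinh_nonneg_iff.mpr (hχ_pos t ht).le) (ha_pos t ht).le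
  refine ⟨hR, hχ0, ?_⟩
  rw [show π / (G * Smax) = (G * Smax / π)⁻¹ by rw [inv_div], Real.sqrt_inv]
  exact tendsto_deriv_div_self (Real.sqrt_pos.mpr (by positivity)).ne' ha_inf hχ0 hR
    (hlate.mono hχ_eq) (hχ_late.mono fun _ => ne_of_gt)

/-- Cosmic no-hair theorem for open Robertson-Walker spacetimes. -/
theorem stmt_3 (G s t₀ Smax : ℝ) (hG : 0 < G) (hs : 0 ≤ s)
    (a χ : ℝ → ℝ)
    (ha_diff : ∀ t, t₀ ≤ t → DifferentiableAt ℝ a t)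
    (ha_pos : ∀ t, t₀ ≤ t → 0 < a t)
    (ha_inf : Tendsto a atTop atTop)
    (hχ_pos : ∀ t, t₀ ≤ t → 0 < χ t)
    (hχ_eq : ∀ t, t₀ ≤ t →
      deriv a t - 2 * G * s / (a t) ^ 2 = Real.cosh (χ t) / Real.sinh (χ t))
    (hSmax : 0 < Smax)
    (hS : Tendsto (fun t => (π / G) * (Real.sinh (χ t)) ^ 2 * (a t) ^ 2 +
        2 * π * (Real.sinh (χ t) * Real.cosh (χ t) - χ t) * s)
      atTop (nhds Smax)) :
    Tendsto (fun t => Real.sinh (χ t) * a t) atTop (nhds (Real.sqrt (G * Smax / π))) ∧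
    Tendsto χ atTop (nhds 0) ∧
    Tendsto (fun t => deriv a t / a t) atTop (nhds (Real.sqrt (π / (G * Smax)))) :=
  stmt_3_general G s t₀ Smax hG hs a χ ha_pos ha_inf hχ_pos hχ_eq hSmax hS
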